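/- arXiv:1205.5323 — 3 statements merged into one kernel-verified Lean document; each statement's English description precedes it below -/
import Mathlib

section
/- Convergence of variational (Tikhonov) regularization: Let A be a bounded linear injective operator on a Hilbert space H, let Ay = f with y ⟂ N(A), and let f_δ satisfy ‖f − f_δ‖ ≤ δ. Define u_{α,δ} = (A*A + αI)^{-1} A* f_δ. If α = α(δ) is chosen so that α(δ) → 0 and δ/α(δ) → 0 as δ → 0, then ‖u_{α(δ),δ} − y‖ → 0 as δ → 0. -/
open scoped RealInnerProductSpace Topology

set_option maxHeartbeats 1000000 in
theorem stmt_9 {H : Type*} [NormedAddCommGroup H] [InnerProductSpace ℝ H]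
    [CompleteSpace H] (A : H →L[ℝ] H) (hinj : Function.Injective A)
    (f y : H) (hy : A y = f) (hperp : ∀ z : H, A z = 0 → ⟪y, z⟫ = 0)
    (R : ℝ → (H →L[ℝ] H))
    (hR : ∀ a > (0:ℝ),
      ((ContinuousLinearMap.adjoint A) ∘L A + a • (1 : H →L[ℝ] H)) ∘L R a = 1 ∧
      R a ∘L ((ContinuousLinearMap.adjoint A) ∘L A + a • (1 : H →L[ℝ] H)) = 1)
    (fδ : ℝ → H) (hfδ : ∀ δ > (0:ℝ), ‖fδ δ - f‖ ≤ δ)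
    (α : ℝ → ℝ) (hαpos : ∀ δ > (0:ℝ), 0 < α δ)
    (hα0 : Filter.Tendsto α (𝓝[>] 0) (𝓝 0))
    (hδα : Filter.Tendsto (fun δ => δ / α δ) (𝓝[>] 0) (𝓝 0)) :
    Filter.Tendsto (fun δ => ‖R (α δ) ((ContinuousLinearMap.adjoint A) (fδ δ)) - y‖)
      (𝓝[>] 0) (𝓝 0) := by
  set T : H →L[ℝ] H := (ContinuousLinearMap.adjoint A) ∘L A with hT
  -- coercivity: a‖x‖ ≤ ‖(T + a•1) x‖
  have hcoerc : ∀ a : ℝ, 0 < a → ∀ x : H, a * ‖x‖ ≤ ‖(T + a • (1 : H →L[ℝ] H)) x‖ := by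
    intro a ha x
    rcases eq_or_ne x 0 with rfl | hx
    · simp
    have h1 : ⟪(T + a • (1 : H →L[ℝ] H)) x, x⟫ = ‖A x‖ ^ 2 + a * ‖x‖ ^ 2 := by
      simp only [ContinuousLinearMap.add_apply, ContinuousLinearMap.smul_apply,
        ContinuousLinearMap.one_apply, inner_add_left, inner_smul_left, hT,
        ContinuousLinearMap.comp_apply]
      rw [ContinuousLinearMap.adjoint_inner_left]
      simp only [real_inner_self_eq_norm_sq, conj_trivial]
    have h2 : a * ‖x‖ ^ 2 ≤ ⟪(T + a • (1 : H →L[ℝ] H)) x, x⟫ := by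
      rw [h1]; nlinarith [sq_nonneg ‖A x‖]
    have h3 : ⟪(T + a • (1 : H →L[ℝ] H)) x, x⟫ ≤ ‖(T + a • (1 : H →L[ℝ] H)) x‖ * ‖x‖ :=
      real_inner_le_norm _ _
    have hxpos : 0 < ‖x‖ := norm_pos_iff.mpr hx
    have hle := le_trans h2 h3
    nlinarith [hle, hxpos]
  -- resolvent bound: ‖R a u‖ ≤ ‖u‖ / a
  have hRbound : ∀ a : ℝ, 0 < a → ∀ u : H, ‖R a u‖ ≤ ‖u‖ / a := by
    intro a ha u
    have h := hcoerc a ha (R a u)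
    have heq : (T + a • (1 : H →L[ℝ] H)) (R a u) = u := by
      have := (hR a ha).1
      calc (T + a • (1 : H →L[ℝ] H)) (R a u)
          = ((T + a • (1 : H →L[ℝ] H)) ∘L R a) u := rfl
        _ = u := by rw [this]; rfl
    rw [heq] at h
    rw [le_div_iff₀ ha]
    linarith [h]
  -- R a (T w) = w - a • R a w
  have hRT : ∀ a : ℝ, 0 < a → ∀ w : H, R a (T w) = w - a • R a w := by
    intro a ha w
    have h2 := (hR a ha).2
    have : R a ((T + a • (1 : H →L[ℝ] H)) w) = w := by
      calc R a ((T + a • (1 : H →L[ℝ] H)) w)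
          = (R a ∘L (T + a • (1 : H →L[ℝ] H))) w := rfl
        _ = w := by rw [h2]; rfl
    have hadd : (T + a • (1 : H →L[ℝ] H)) w = T w + a • w := by
      simp [ContinuousLinearMap.add_apply]
    rw [hadd, map_add, map_smul] at this
    exact eq_sub_of_add_eq this
  -- ker T trivial, range T dense
  have hdense : Dense ((LinearMap.range (T : H →ₗ[ℝ] H) : Submodule ℝ H) : Set H) := by
    rw [Submodule.dense_iff_topologicalClosure_eq_top,
      Submodule.topologicalClosure_eq_top_iff, Submodule.eq_bot_iff]
    intro x hx
    have hTx : ⟪T x, x⟫ = ‖A x‖ ^ 2 := by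
      simp only [hT, ContinuousLinearMap.comp_apply]
      rw [ContinuousLinearMap.adjoint_inner_left]
      simp [real_inner_self_eq_norm_sq]
    have hx2 := hx (T x) ⟨x, rfl⟩
    have hz : ‖A x‖ ^ 2 = 0 := by rw [← hTx]; exact hx2
    have : A x = 0 := by
      have hn : ‖A x‖ = 0 := by nlinarith [norm_nonneg (A x)]
      exact norm_eq_zero.mp hn
    have : A x = A 0 := by simpa using this
    exact hinj this
  -- bias term tends to zero
  have hbias : Filter.Tendsto (fun a : ℝ => ‖a • R a y‖) (𝓝[>] 0) (𝓝 0) := by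
    rw [Metric.tendsto_nhdsWithin_nhds]
    intro ε hε
    obtain ⟨z, hz, hzy⟩ : ∃ z ∈ ((LinearMap.range (T : H →ₗ[ℝ] H) : Submodule ℝ H) : Set H),
        dist y z < ε / 2 := by
      have hyc : y ∈ closure ((LinearMap.range (T : H →ₗ[ℝ] H) : Submodule ℝ H) : Set H) :=
        hdense y
      exact Metric.mem_closure_iff.mp hyc (ε / 2) (by linarith)
    obtain ⟨w, hw⟩ := hz
    refine ⟨ε / (4 * (‖w‖ + 1)), by positivity, ?_⟩
    intro a ha hadist
    simp only [Set.mem_Ioi] at ha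
    rw [Real.dist_eq, sub_zero, abs_of_pos ha] at hadist
    have hb1 : ‖a • R a (y - T w)‖ ≤ ‖y - T w‖ := by
      rw [norm_smul, Real.norm_eq_abs, abs_of_pos ha]
      have := hRbound a ha (y - T w)
      calc a * ‖R a (y - T w)‖ ≤ a * (‖y - T w‖ / a) := by
            exact mul_le_mul_of_nonneg_left this ha.le
        _ = ‖y - T w‖ := by field_simp
    have hb2 : ‖a • R a (T w)‖ ≤ 2 * a * ‖w‖ := by
      rw [hRT a ha w, smul_sub, smul_smul]
      calc ‖a • w - (a * a) • R a w‖ ≤ ‖a • w‖ + ‖(a * a) • R a w‖ := norm_sub_le _ _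
        _ ≤ a * ‖w‖ + (a * a) * (‖w‖ / a) := by
            gcongr
            · rw [norm_smul, Real.norm_eq_abs, abs_of_pos ha]
            · rw [norm_smul, Real.norm_eq_abs, abs_of_pos (by positivity : (0:ℝ) < a * a)]
              exact mul_le_mul_of_nonneg_left (hRbound a ha w) (by positivity)
        _ = 2 * a * ‖w‖ := by field_simp; ring
    have hsplit : ‖a • R a y‖ ≤ ‖a • R a (y - T w)‖ + ‖a • R a (T w)‖ := by
      have : a • R a y = a • R a (y - T w) + a • R a (T w) := by
        rw [← smul_add, ← map_add, sub_add_cancel]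
      rw [this]; exact norm_add_le _ _
    have hyz : ‖y - T w‖ < ε / 2 := by
      rw [← hw] at hzy; rwa [dist_eq_norm] at hzy
    have haw : 2 * a * ‖w‖ < ε / 2 := by
      have h1 : a < ε / (4 * (‖w‖ + 1)) := hadist
      have h2 : 2 * a * ‖w‖ ≤ 2 * a * (‖w‖ + 1) := by nlinarith [norm_nonneg w]
      have h3 : 2 * (ε / (4 * (‖w‖ + 1))) * (‖w‖ + 1) = ε / 2 := by
        have : (0:ℝ) < ‖w‖ + 1 := by positivity
        field_simp
        ring
      nlinarith [norm_nonneg w]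
    rw [Real.dist_eq, sub_zero, abs_of_nonneg (norm_nonneg _)]
    calc ‖a • R a y‖ ≤ ‖a • R a (y - T w)‖ + ‖a • R a (T w)‖ := hsplit
      _ ≤ ‖y - T w‖ + 2 * a * ‖w‖ := by gcongr
      _ < ε / 2 + ε / 2 := by gcongr
      _ = ε := by ring
  -- α tends into (0, ∞)
  have hαin : Filter.Tendsto α (𝓝[>] 0) (𝓝[>] 0) := by
    rw [tendsto_nhdsWithin_iff]
    refine ⟨hα0, ?_⟩
    filter_upwards [self_mem_nhdsWithin] with δ hδ
    exact hαpos δ hδ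
  -- main estimate and squeeze
  have hbound : ∀ᶠ δ in 𝓝[>] (0:ℝ),
      ‖R (α δ) ((ContinuousLinearMap.adjoint A) (fδ δ)) - y‖
        ≤ ‖A‖ * (δ / α δ) + ‖(α δ) • R (α δ) y‖ := by
    filter_upwards [self_mem_nhdsWithin] with δ hδ
    have hδ' : (0:ℝ) < δ := hδ
    set a := α δ with haa
    have ha : 0 < a := hαpos δ hδ'
    have hsplit : R a ((ContinuousLinearMap.adjoint A) (fδ δ)) - y
        = R a ((ContinuousLinearMap.adjoint A) (fδ δ - f)) + (R a (T y) - y) := by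
      rw [map_sub, map_sub, hT]
      simp only [ContinuousLinearMap.comp_apply, hy]
      abel
    have hterm2 : R a (T y) - y = -(a • R a y) := by
      rw [hRT a ha y]; abel
    have hterm1 : ‖R a ((ContinuousLinearMap.adjoint A) (fδ δ - f))‖ ≤ ‖A‖ * (δ / a) := by
      calc ‖R a ((ContinuousLinearMap.adjoint A) (fδ δ - f))‖
          ≤ ‖(ContinuousLinearMap.adjoint A) (fδ δ - f)‖ / a := hRbound a ha _
        _ ≤ (‖ContinuousLinearMap.adjoint A‖ * ‖fδ δ - f‖) / a := by
            gcongr; exact ContinuousLinearMap.le_opNorm _ _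
        _ ≤ (‖ContinuousLinearMap.adjoint A‖ * δ) / a := by
            gcongr; exact hfδ δ hδ'
        _ = ‖A‖ * (δ / a) := by
            rw [LinearIsometryEquiv.norm_map ContinuousLinearMap.adjoint A]; ring
    calc ‖R a ((ContinuousLinearMap.adjoint A) (fδ δ)) - y‖
        = ‖R a ((ContinuousLinearMap.adjoint A) (fδ δ - f)) + (R a (T y) - y)‖ := by
          rw [hsplit]
      _ ≤ ‖R a ((ContinuousLinearMap.adjoint A) (fδ δ - f))‖ + ‖R a (T y) - y‖ :=
          norm_add_le _ _
      _ ≤ ‖A‖ * (δ / a) + ‖a • R a y‖ := by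
          rw [hterm2, norm_neg]; gcongr
  have hgoal : Filter.Tendsto
      (fun δ => ‖A‖ * (δ / α δ) + ‖(α δ) • R (α δ) y‖) (𝓝[>] (0:ℝ)) (𝓝 0) := by
    have h1 : Filter.Tendsto (fun δ => ‖A‖ * (δ / α δ)) (𝓝[>] (0:ℝ)) (𝓝 0) := by
      have := hδα.const_mul ‖A‖
      simpa using this
    have h2 : Filter.Tendsto (fun δ => ‖(α δ) • R (α δ) y‖) (𝓝[>] (0:ℝ)) (𝓝 0) :=
      hbias.comp hαin
    simpa using h1.add h2
  exact squeeze_zero' (Filter.Eventually.of_forall fun δ => norm_nonneg _) hbound hgoal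
end

section
/- Monotonicity in the discrepancy principle: let Q be a bounded, self-adjoint, non-negative operator on a Hilbert space H with ‖Q‖ ≤ 1 and let g ∈ H, g ≠ 0. Then the function I(α) = α²‖(Q + αI)^{-1} g‖² is monotone increasing on (0, ∞), with lim_{α→∞} I(α) = ‖g‖² and lim_{α→0⁺} I(α) = ‖P_{N(Q)} g‖², where P_{N(Q)} is the orthogonal projection onto the null-space of Q. -/
open scoped RealInnerProductSpace Topology

open Filter

/-! Write `u_a = (Q + a)⁻¹ g`, so that `I(a) = ‖a • u_a‖²`. For `0 ≤ a ≤ b` the resolvent identity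
`u_a - u_b = (b - a) (Q + a)⁻¹ u_b` together with `b u_b = a u_a + Q (u_a - u_b)` gives
`b² ‖u_b‖² - a² ‖u_a‖² = 2a ⟪Q (u_a - u_b), u_a⟫ + ‖Q (u_a - u_b)‖²`, and the inner product is
`(b - a) (‖Q p‖² + b ⟪Q p, p⟫) ≥ 0` with `p = (Q + a)⁻¹ u_b`.

The operators `a (Q + a)⁻¹` have norm at most `1` and converge strongly to the identity as
`a → ∞`. As `a → 0⁺` they fix `N(Q)` and tend to `0` on `R(Q)`, hence, by the uniform bound, on
its closure `N(Q)ᗮ`, which contains `g - P g`. -/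

section Resolvent

variable {E : Type*} [NormedAddCommGroup E] [NormedSpace ℝ E] {Q T : E →L[ℝ] E} {a : ℝ}

theorem apply_add_smul_apply_of_rightInverse (hT : (Q + a • 1) ∘L T = 1) (x : E) :
    Q (T x) + a • T x = x := by
  simpa using DFunLike.congr_fun hT x

theorem apply_add_smul_of_leftInverse (hT : T ∘L (Q + a • 1) = 1) (x : E) :
    T (Q x + a • x) = x := by
  simpa using DFunLike.congr_fun hT x

theorem smul_apply_of_leftInverse_of_apply_eq_zero (hT : T ∘L (Q + a • 1) = 1) {x : E}
    (hx : Q x = 0) : a • T x = x := by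
  simpa [hx] using apply_add_smul_of_leftInverse hT x

theorem apply_apply_of_leftInverse (hT : T ∘L (Q + a • 1) = 1) (x : E) :
    T (Q x) = x - a • T x := by
  rw [eq_sub_iff_add_eq, ← map_smul, ← map_add, apply_add_smul_of_leftInverse hT]

end Resolvent

theorem ContinuousLinearMap.tendsto_zero_of_mem_closure {ι 𝕜 E F : Type*}
    [NontriviallyNormedField 𝕜]
    [SeminormedAddCommGroup E] [NormedSpace 𝕜 E] [SeminormedAddCommGroup F] [NormedSpace 𝕜 F]
    {l : Filter ι} {A : ι → E →L[𝕜] F} {C : ℝ} (hC : ∀ᶠ i in l, ‖A i‖ ≤ C) {s : Set E}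
    (hs : ∀ y ∈ s, Tendsto (fun i => A i y) l (𝓝 0)) {x : E} (hx : x ∈ closure s) :
    Tendsto (fun i => A i x) l (𝓝 0) := by
  refine Metric.tendsto_nhds.2 fun ε hε => ?_
  obtain ⟨y, hys, hxy⟩ := Metric.mem_closure_iff.1 hx (ε / 2 / (|C| + 1)) (by positivity)
  have hCxy : C * ‖x - y‖ < ε / 2 := by
    rw [← dist_eq_norm]
    have := (lt_div_iff₀ (by positivity : (0:ℝ) < |C| + 1)).1 hxy
    nlinarith [le_abs_self C, dist_nonneg (x := x) (y := y)]
  filter_upwards [hC, Metric.tendsto_nhds.1 (hs y hys) (ε / 2) (by positivity)] with i hi hiy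
  rw [dist_zero_right] at hiy ⊢
  calc ‖A i x‖ = ‖A i (x - y) + A i y‖ := by rw [map_sub, sub_add_cancel]
    _ ≤ ‖A i‖ * ‖x - y‖ + ‖A i y‖ := norm_add_le_of_le ((A i).le_opNorm _) le_rfl
    _ < ε := by nlinarith [norm_nonneg (x - y)]

section NonnegOperator

variable {H : Type*} [NormedAddCommGroup H] [InnerProductSpace ℝ H] {Q : H →L[ℝ] H}
  {R : ℝ → H →L[ℝ] H}

theorem mul_norm_apply_le_of_rightInverse (hQ : ∀ u, 0 ≤ ⟪Q u, u⟫) {a : ℝ}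
    {T : H →L[ℝ] H} (hT : (Q + a • 1) ∘L T = 1) (x : H) : a * ‖T x‖ ≤ ‖x‖ := by
  rcases (norm_nonneg (T x)).eq_or_lt with h0 | hpos
  · rw [← h0, mul_zero]; exact norm_nonneg x
  refine le_of_mul_le_mul_right ?_ hpos
  calc a * ‖T x‖ * ‖T x‖ ≤ ⟪Q (T x), T x⟫ + a * ⟪T x, T x⟫ := by
        rw [real_inner_self_eq_norm_sq]; nlinarith [hQ (T x)]
    _ = ⟪x, T x⟫ := by
        rw [← real_inner_smul_left, ← inner_add_left, apply_add_smul_apply_of_rightInverse hT]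
    _ ≤ ‖x‖ * ‖T x‖ := real_inner_le_norm x (T x)

theorem norm_smul_le_one_of_rightInverse (hQ : ∀ u, 0 ≤ ⟪Q u, u⟫) {a : ℝ} (ha : 0 ≤ a)
    {T : H →L[ℝ] H} (hT : (Q + a • 1) ∘L T = 1) : ‖a • T‖ ≤ 1 :=
  ContinuousLinearMap.opNorm_le_bound _ zero_le_one fun x => by
    simpa [norm_smul, abs_of_nonneg ha, mul_assoc]
      using mul_norm_apply_le_of_rightInverse hQ hT x

theorem sq_mul_norm_sq_apply_le_of_inverse (hQ : ∀ u, 0 ≤ ⟪Q u, u⟫) {a b : ℝ} (ha : 0 ≤ a)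
    (hab : a ≤ b) {S T : H →L[ℝ] H} (hS : (Q + a • 1) ∘L S = 1) (hS' : S ∘L (Q + a • 1) = 1)
    (hT : (Q + b • 1) ∘L T = 1) (g : H) : a ^ 2 * ‖S g‖ ^ 2 ≤ b ^ 2 * ‖T g‖ ^ 2 := by
  set u := S g
  set v := T g
  set p := S v
  have hu : Q u + a • u = g := apply_add_smul_apply_of_rightInverse hS g
  have hv : Q v + b • v = g := apply_add_smul_apply_of_rightInverse hT g
  have hp : Q p + a • p = v := apply_add_smul_apply_of_rightInverse hS v
  have hup : u - v = (b - a) • p := by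
    have : S (Q v + a • v) = v := apply_add_smul_of_leftInverse hS' v
    rw [show Q v + a • v = g - (b - a) • v by rw [← hv]; module, map_sub, map_smul] at this
    rw [← this]; module
  have hbv : b • v = a • u + Q (u - v) := by
    rw [map_sub]; linear_combination (norm := module) hv - hu
  have hQu : 0 ≤ ⟪Q (u - v), u⟫ := by
    have hu' : u = Q p + b • p := by rw [← sub_add_cancel u v, hup, ← hp]; module
    rw [hup, map_smul, real_inner_smul_left, hu', inner_add_right, real_inner_smul_right]
    exact mul_nonneg (by linarith) (add_nonneg real_inner_self_nonneg
      (mul_nonneg (ha.trans hab) (hQ p)))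
  have hexpand :
      b ^ 2 * ‖v‖ ^ 2 = a ^ 2 * ‖u‖ ^ 2 + 2 * a * ⟪Q (u - v), u⟫ + ‖Q (u - v)‖ ^ 2 := by
    rw [← mul_pow, ← abs_of_nonneg (ha.trans hab), ← Real.norm_eq_abs, ← norm_smul, hbv,
      norm_add_sq_real, norm_smul, real_inner_smul_left, real_inner_comm, Real.norm_eq_abs,
      abs_of_nonneg ha]
    ring
  nlinarith [sq_nonneg ‖Q (u - v)‖]


theorem tendsto_smul_apply_atTop_of_rightInverse (hQ : ∀ u, 0 ≤ ⟪Q u, u⟫)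
    (hR : ∀ a > 0, (Q + a • 1) ∘L R a = 1) (x : H) :
    Tendsto (fun a => a • R a x) atTop (𝓝 x) := by
  rw [tendsto_iff_norm_sub_tendsto_zero]
  refine squeeze_zero' (Eventually.of_forall fun a => norm_nonneg _) ?_
    ((tendsto_const_nhds (x := ‖Q‖ * ‖x‖)).div_atTop tendsto_id)
  filter_upwards [eventually_gt_atTop 0] with a ha
  have hQR : a • R a x - x = -Q (R a x) := by
    linear_combination (norm := module) apply_add_smul_apply_of_rightInverse (hR a ha) x
  rw [id, hQR, norm_neg, le_div_iff₀ ha]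
  calc ‖Q (R a x)‖ * a ≤ ‖Q‖ * ‖R a x‖ * a := by gcongr; exact Q.le_opNorm _
    _ = ‖Q‖ * (a * ‖R a x‖) := by ring
    _ ≤ ‖Q‖ * ‖x‖ := by gcongr; exact mul_norm_apply_le_of_rightInverse hQ (hR a ha) x

theorem tendsto_smul_apply_apply_nhdsGT_zero (hQ : ∀ u, 0 ≤ ⟪Q u, u⟫)
    (hR : ∀ a > 0, (Q + a • 1) ∘L R a = 1) (hR' : ∀ a > 0, R a ∘L (Q + a • 1) = 1) (z : H) :
    Tendsto (fun a => a • R a (Q z)) (𝓝[>] 0) (𝓝 0) := by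
  have hbdd : IsBoundedUnder (· ≤ ·) (𝓝[>] (0 : ℝ)) (fun a => ‖a • R a z‖) :=
    isBoundedUnder_of_eventually_le (a := ‖z‖) <| eventually_mem_nhdsWithin.mono fun a ha => by
      simpa [norm_smul, abs_of_pos (show (0 : ℝ) < a from ha)]
        using mul_norm_apply_le_of_rightInverse hQ (hR a ha) z
  have hlim : Tendsto (fun a : ℝ => a • z - a • (a • R a z)) (𝓝[>] 0) (𝓝 0) := by
    have hid : Tendsto (fun a : ℝ => a) (𝓝[>] 0) (𝓝 0) := nhdsWithin_le_nhds
    simpa using (hid.smul_const z).sub (hid.zero_smul_isBoundedUnder_le hbdd)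
  refine hlim.congr' (eventually_mem_nhdsWithin.mono fun a ha => ?_)
  dsimp only
  rw [apply_apply_of_leftInverse (hR' a ha), smul_sub]

end NonnegOperator

theorem IsSelfAdjoint.mem_closure_range_of_inner_eq_zero {H : Type*} [NormedAddCommGroup H]
    [InnerProductSpace ℝ H] [CompleteSpace H] {Q : H →L[ℝ] H} (hQ : IsSelfAdjoint Q) {x : H}
    (hx : ∀ z, Q z = 0 → ⟪x, z⟫ = 0) : x ∈ closure (Q.range : Set H) := by
  have : x ∈ Q.kerᗮ := (Submodule.mem_orthogonal' _ x).2 hx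
  rwa [Q.orthogonal_ker, hQ.adjoint_eq, ← SetLike.mem_coe,
    Submodule.topologicalClosure_coe] at this

theorem stmt_12_general {H : Type*} [NormedAddCommGroup H] [InnerProductSpace ℝ H]
    [CompleteSpace H] (Q : H →L[ℝ] H) (hsa : IsSelfAdjoint Q)
    (hnn : ∀ u : H, 0 ≤ ⟪Q u, u⟫)
    (g : H)
    (R : ℝ → (H →L[ℝ] H))
    (hR : ∀ a > (0:ℝ), (Q + a • (1 : H →L[ℝ] H)) ∘L R a = 1 ∧
      R a ∘L (Q + a • (1 : H →L[ℝ] H)) = 1)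
    (Pg : H)  -- Pg = orthogonal projection of g onto N(Q)
    (hPg1 : Q Pg = 0) (hPg2 : ∀ z : H, Q z = 0 → ⟪g - Pg, z⟫ = 0) :
    MonotoneOn (fun a : ℝ => a ^ 2 * ‖R a g‖ ^ 2) (Set.Ioi 0) ∧
    Filter.Tendsto (fun a : ℝ => a ^ 2 * ‖R a g‖ ^ 2) Filter.atTop (𝓝 (‖g‖ ^ 2)) ∧
    Filter.Tendsto (fun a : ℝ => a ^ 2 * ‖R a g‖ ^ 2) (𝓝[>] 0) (𝓝 (‖Pg‖ ^ 2)) := by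
  have hI : (fun a : ℝ => a ^ 2 * ‖R a g‖ ^ 2) = fun a => ‖a • R a g‖ ^ 2 := by
    ext a; rw [norm_smul, mul_pow, Real.norm_eq_abs, sq_abs]
  refine ⟨fun a ha b hb hab => ?_, ?_, ?_⟩
  · exact sq_mul_norm_sq_apply_le_of_inverse hnn ha.le hab (hR a ha).1 (hR a ha).2
      (hR b hb).1 g
  · rw [hI]
    exact (tendsto_smul_apply_atTop_of_rightInverse hnn (fun a ha => (hR a ha).1) g).norm.pow 2
  · rw [hI]
    refine (Tendsto.norm ?_).pow 2
    have hker : ∀ᶠ a in 𝓝[>] 0, Pg = a • R a Pg :=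
      eventually_mem_nhdsWithin.mono fun a ha =>
        (smul_apply_of_leftInverse_of_apply_eq_zero (hR a ha).2 hPg1).symm
    have hrange : Tendsto (fun a => (a • R a) (g - Pg)) (𝓝[>] 0) (𝓝 0) :=
      ContinuousLinearMap.tendsto_zero_of_mem_closure
        (eventually_mem_nhdsWithin.mono fun a ha =>
          norm_smul_le_one_of_rightInverse hnn (le_of_lt ha) (hR a ha).1)
        (by rintro _ ⟨z, rfl⟩
            exact tendsto_smul_apply_apply_nhdsGT_zero hnn (fun a ha => (hR a ha).1)
              (fun a ha => (hR a ha).2) z)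
        (hsa.mem_closure_range_of_inner_eq_zero hPg2)
    simpa [smul_sub] using (tendsto_const_nhds.congr' hker).add hrange

theorem stmt_12 {H : Type*} [NormedAddCommGroup H] [InnerProductSpace ℝ H]
    [CompleteSpace H] (Q : H →L[ℝ] H) (hsa : IsSelfAdjoint Q)
    (hnn : ∀ u : H, 0 ≤ ⟪Q u, u⟫) (hQ : ‖Q‖ ≤ 1)
    (g : H) (hg : g ≠ 0)
    (R : ℝ → (H →L[ℝ] H))
    (hR : ∀ a > (0:ℝ), (Q + a • (1 : H →L[ℝ] H)) ∘L R a = 1 ∧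
      R a ∘L (Q + a • (1 : H →L[ℝ] H)) = 1)
    (Pg : H)  -- Pg = orthogonal projection of g onto N(Q)
    (hPg1 : Q Pg = 0) (hPg2 : ∀ z : H, Q z = 0 → ⟪g - Pg, z⟫ = 0) :
    MonotoneOn (fun a : ℝ => a ^ 2 * ‖R a g‖ ^ 2) (Set.Ioi 0) ∧
    Filter.Tendsto (fun a : ℝ => a ^ 2 * ‖R a g‖ ^ 2) Filter.atTop (𝓝 (‖g‖ ^ 2)) ∧
    Filter.Tendsto (fun a : ℝ => a ^ 2 * ‖R a g‖ ^ 2) (𝓝[>] 0) (𝓝 (‖Pg‖ ^ 2)) :=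
  stmt_12_general Q hsa hnn g R hR Pg hPg1 hPg2
end

section
/- Key resolvent estimate for DSM: let A be a bounded linear operator on a Hilbert space H with ‖A‖ ≤ 1, B = A*A, and ε > 0. Then ‖(B + εI)^{-1} A*‖ ≤ 1/(2√ε). -/
open RealInnerProductSpace


theorem stmt_19 {H : Type*} [NormedAddCommGroup H] [InnerProductSpace ℝ H]
    [CompleteSpace H] (A : H →L[ℝ] H) (hA : ‖A‖ ≤ 1)
    (ε : ℝ) (hε : 0 < ε)
    (R : H →L[ℝ] H)
    (hR1 : ((ContinuousLinearMap.adjoint A) ∘L A + ε • (1 : H →L[ℝ] H)) ∘L R = 1)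
    (hR2 : R ∘L ((ContinuousLinearMap.adjoint A) ∘L A + ε • (1 : H →L[ℝ] H)) = 1) :
    ‖R ∘L ContinuousLinearMap.adjoint A‖ ≤ 1 / (2 * Real.sqrt ε) := by
  have hs : (0:ℝ) < Real.sqrt ε := Real.sqrt_pos.mpr hε
  have hs2 : Real.sqrt ε ^ 2 = ε := Real.sq_sqrt hε.le
  apply ContinuousLinearMap.opNorm_le_bound _ (by positivity)
  intro x
  set y := R ((ContinuousLinearMap.adjoint A) x) with hy
  have heq : (ContinuousLinearMap.adjoint A) (A y) + ε • y
      = (ContinuousLinearMap.adjoint A) x := by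
    have := congrArg (fun T : H →L[ℝ] H => T ((ContinuousLinearMap.adjoint A) x)) hR1
    simpa [ContinuousLinearMap.comp_apply, ContinuousLinearMap.add_apply,
      ContinuousLinearMap.smul_apply] using this
  have hinner : ‖A y‖^2 + ε * ‖y‖^2 = ⟪x, A y⟫ := by
    have h := congrArg (fun z => ⟪z, y⟫) heq
    simp only [inner_add_left, real_inner_smul_left,
      ContinuousLinearMap.adjoint_inner_left] at h
    rw [real_inner_self_eq_norm_sq, real_inner_self_eq_norm_sq] at h
    linarith [h]
  have h1 : ⟪x, A y⟫ ≤ ‖x‖ * ‖A y‖ := real_inner_le_norm x (A y)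
  have key : ε * ‖y‖^2 ≤ ‖x‖^2 / 4 := by
    nlinarith [sq_nonneg (‖A y‖ - ‖x‖ / 2)]
  have hyx : ‖y‖ ≤ 1 / (2 * Real.sqrt ε) * ‖x‖ := by
    rw [div_mul_eq_mul_div, one_mul, le_div_iff₀ (by positivity)]
    nlinarith [norm_nonneg y, norm_nonneg x, mul_nonneg (norm_nonneg y) hs.le]
  simpa using hyx
end
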